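/- Let L ∈ {ALC, ALCI}. There exists a collection of labeled ABox-consistency examples E such that for no collection of labeled ABox-AQ examples E' do E and E' have the same set of fitting L-ontologies. Concretely, for E = ({{s(a,b)}}, ∅) and any collection E' of ABox-AQ examples: if E' contains a negative example (A, A'(a)) then the ontology {⊤ ⊑ A'} fits E but not E'; if E' contains no negative example then {⊤ ⊑ ⊥} fits E' but not E. -/

import Mathlib

/-!
Formalization background for "Fitting Ontologies to ABox-Query Examples":
description logics ALC / ALCI / ALCQ, ABoxes, interpretations (with standard
names assumption), ontologies, queries (AQ / CQ / full CQ / UCQ), fitting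
problems, homomorphisms, forest models, unravelings, etc.
-/

namespace DLFit

/-- Roles: role names and inverse roles (both indexed by natural numbers). -/
inductive DLRole : Type
  | name (r : ℕ)
  | inv (r : ℕ)
deriving DecidableEq

/-- Concepts of ALCIQ, a common superlanguage of ALC, ALCI and ALCQ. -/
inductive Concept : Type
  | top
  | atom (A : ℕ)
  | neg (C : Concept)
  | inter (C D : Concept)
  | ex (r : DLRole) (C : Concept)
  | atLeast (n : ℕ) (r : DLRole) (C : Concept)
  | atMost (n : ℕ) (r : DLRole) (C : Concept)
deriving DecidableEq

/-- A concept uses no inverse roles. -/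
def Concept.invFree : Concept → Prop
  | .top => True
  | .atom _ => True
  | .neg C => C.invFree
  | .inter C D => C.invFree ∧ D.invFree
  | .ex r C => (∃ m, r = DLRole.name m) ∧ C.invFree
  | .atLeast _ r C => (∃ m, r = DLRole.name m) ∧ C.invFree
  | .atMost _ r C => (∃ m, r = DLRole.name m) ∧ C.invFree

/-- A concept uses no qualified number restrictions. -/
def Concept.countFree : Concept → Prop
  | .top => True
  | .atom _ => True
  | .neg C => C.countFree
  | .inter C D => C.countFree ∧ D.countFree
  | .ex _ C => C.countFree
  | .atLeast _ _ _ => False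
  | .atMost _ _ _ => False

/-- An ontology is a finite set of concept inclusions `C ⊑ D`. -/
abbrev Ontology := Finset (Concept × Concept)

/-- The two ontology languages considered: ALC and ALCI. -/
inductive DL : Type
  | alc
  | alci
deriving DecidableEq

/-- Membership of an ontology in ALC resp. ALCI. -/
def OntologyInLang : DL → Ontology → Prop
  | .alc, O => ∀ ci ∈ O, ci.1.invFree ∧ ci.1.countFree ∧ ci.2.invFree ∧ ci.2.countFree
  | .alci, O => ∀ ci ∈ O, ci.1.countFree ∧ ci.2.countFree

/-- An ALCQ-ontology: no inverse roles (number restrictions allowed). -/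
def OntologyIsALCQ (O : Ontology) : Prop := ∀ ci ∈ O, ci.1.invFree ∧ ci.2.invFree

/-- ABox assertions `A(a)` and `r(a,b)`. -/
inductive Assertion : Type
  | conc (A : ℕ) (a : ℕ)
  | role (r : ℕ) (a b : ℕ)
deriving DecidableEq

/-- An ABox is a finite set of assertions. -/
abbrev ABox := Finset Assertion

def AssertionInds : Assertion → Finset ℕ
  | .conc _ a => {a}
  | .role _ a b => {a, b}

/-- The individual names occurring in an ABox. -/
def ABoxInds (A : ABox) : Finset ℕ := A.biUnion AssertionInds

def AssertionCNs : Assertion → Finset ℕ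
  | .conc P _ => {P}
  | .role _ _ _ => ∅

/-- The concept names occurring in an ABox. -/
def ABoxCNs (A : ABox) : Finset ℕ := A.biUnion AssertionCNs

/-- An interpretation, with the standard names assumption: every individual
name denotes itself, i.e. the (injective) map `indI` embeds the individual
names into the domain. -/
structure Interp : Type 1 where
  Dom : Type
  indI : ℕ → Dom
  indI_inj : Function.Injective indI
  concI : ℕ → Set Dom
  roleI : ℕ → Set (Dom × Dom)

/-- Semantics of (possibly inverse) roles. -/
def Interp.rSem (I : Interp) : DLRole → Set (I.Dom × I.Dom)
  | .name r => I.roleI r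
  | .inv r => {p | (p.2, p.1) ∈ I.roleI r}

/-- Semantics of concepts. -/
def Interp.cSem (I : Interp) : Concept → Set I.Dom
  | .top => Set.univ
  | .atom A => I.concI A
  | .neg C => (I.cSem C)ᶜ
  | .inter C D => I.cSem C ∩ I.cSem D
  | .ex r C => {d | ∃ e, (d, e) ∈ I.rSem r ∧ e ∈ I.cSem C}
  | .atLeast n r C => {d | (n : ℕ∞) ≤ {e | (d, e) ∈ I.rSem r ∧ e ∈ I.cSem C}.encard}
  | .atMost n r C => {d | {e | (d, e) ∈ I.rSem r ∧ e ∈ I.cSem C}.encard ≤ (n : ℕ∞)}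

/-- `I` is a model of the ontology `O`. -/
def Interp.IsModelOf (I : Interp) (O : Ontology) : Prop :=
  ∀ ci ∈ O, I.cSem ci.1 ⊆ I.cSem ci.2

def Interp.SatAssertion (I : Interp) : Assertion → Prop
  | .conc P a => I.indI a ∈ I.concI P
  | .role r a b => (I.indI a, I.indI b) ∈ I.roleI r

/-- `I` is a model of the ABox `A` (individual names interpreted as themselves). -/
def Interp.SatABox (I : Interp) (A : ABox) : Prop := ∀ α ∈ A, I.SatAssertion α

/-- An ABox is consistent with an ontology if they have a common model. -/
def ConsistentWith (A : ABox) (O : Ontology) : Prop :=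
  ∃ I : Interp, I.IsModelOf O ∧ I.SatABox A

/-- Homomorphism between ABoxes (need not fix individual names). -/
def ABoxHom (h : ℕ → ℕ) (A B : ABox) : Prop :=
  (∀ P a, Assertion.conc P a ∈ A → Assertion.conc P (h a) ∈ B) ∧
  (∀ r a b, Assertion.role r a b ∈ A → Assertion.role r (h a) (h b) ∈ B)

/-- Homomorphism from an ABox into an interpretation. -/
def ABoxIHom (I : Interp) (h : ℕ → I.Dom) (A : ABox) : Prop :=
  (∀ P a, Assertion.conc P a ∈ A → h a ∈ I.concI P) ∧
  (∀ r a b, Assertion.role r a b ∈ A → (h a, h b) ∈ I.roleI r)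

/-- Local injectivity of a homomorphism on an ABox. -/
def LocInj {D : Type} (h : ℕ → D) (A : ABox) : Prop :=
  ∀ r a b c, Assertion.role r a b ∈ A → Assertion.role r a c ∈ A → h b = h c → b = c

/-- The ABoxes in a collection of examples have pairwise disjoint individual names. -/
def PairwiseDisjInds (S : Finset ABox) : Prop :=
  ∀ A ∈ S, ∀ B ∈ S, A ≠ B → Disjoint (ABoxInds A) (ABoxInds B)

/-! ## Queries -/

/-- Terms of a query: variables and individual names. -/
inductive Term : Type
  | var (x : ℕ)
  | ind (a : ℕ)
deriving DecidableEq

/-- Atoms of a query. -/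
inductive Atom : Type
  | catom (A : ℕ) (t : Term)
  | ratom (r : ℕ) (t t' : Term)
deriving DecidableEq

/-- A (Boolean) conjunctive query, viewed as its finite set of atoms;
all variables are (implicitly) existentially quantified. -/
abbrev CQ := Finset Atom

/-- A union of conjunctive queries. -/
abbrev UCQ := Finset CQ

def TermInds : Term → Finset ℕ
  | .var _ => ∅
  | .ind a => {a}

def AtomInds : Atom → Finset ℕ
  | .catom _ t => TermInds t
  | .ratom _ t t' => TermInds t ∪ TermInds t'

/-- Individual names occurring in a CQ. -/
def CQInds (q : CQ) : Finset ℕ := q.biUnion AtomInds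

def UCQInds (q : UCQ) : Finset ℕ := q.biUnion CQInds

def AtomCNs : Atom → Finset ℕ
  | .catom P _ => {P}
  | .ratom _ _ _ => ∅

/-- Concept names occurring in a CQ. -/
def CQCNs (q : CQ) : Finset ℕ := q.biUnion AtomCNs

def UCQCNs (q : UCQ) : Finset ℕ := q.biUnion CQCNs

def AtomGround : Atom → Prop
  | .catom _ t => ∃ a, t = Term.ind a
  | .ratom _ t t' => (∃ a, t = Term.ind a) ∧ (∃ a, t' = Term.ind a)

/-- A full CQ: no (existentially quantified) variables. -/
def CQIsFull (q : CQ) : Prop := ∀ α ∈ q, AtomGround α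

def TermEval (I : Interp) (v : ℕ → I.Dom) : Term → I.Dom
  | .var x => v x
  | .ind a => I.indI a

def Interp.SatAtom (I : Interp) (v : ℕ → I.Dom) : Atom → Prop
  | .catom P t => TermEval I v t ∈ I.concI P
  | .ratom r t t' => (TermEval I v t, TermEval I v t') ∈ I.roleI r

/-- `I ⊨ q` for a CQ `q`: there is a (strong) homomorphism of the atoms of `q`
into `I` that is the identity on individual names. -/
def Interp.SatCQ (I : Interp) (q : CQ) : Prop :=
  ∃ v : ℕ → I.Dom, ∀ α ∈ q, I.SatAtom v α

/-- `I ⊨ q` for a UCQ `q`: some disjunct is satisfied. -/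
def Interp.SatUCQ (I : Interp) (q : UCQ) : Prop := ∃ p ∈ q, I.SatCQ p

/-- `A ∪ O ⊨ Q(a)` for an atomic query. -/
def EntailsAQ (A : ABox) (O : Ontology) (Q a : ℕ) : Prop :=
  ∀ I : Interp, I.IsModelOf O → I.SatABox A → I.indI a ∈ I.concI Q

/-- `A ∪ O ⊨ q` for a CQ. -/
def EntailsCQ (A : ABox) (O : Ontology) (q : CQ) : Prop :=
  ∀ I : Interp, I.IsModelOf O → I.SatABox A → I.SatCQ q

/-- `A ∪ O ⊨ q` for a UCQ. -/
def EntailsUCQ (A : ABox) (O : Ontology) (q : UCQ) : Prop :=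
  ∀ I : Interp, I.IsModelOf O → I.SatABox A → I.SatUCQ q

/-! ## Examples and fitting -/

/-- An ABox-AQ example `(𝒜, Q(a))`. -/
abbrev AQEx := ABox × ℕ × ℕ

/-- An ABox-CQ (in particular, ABox-FullCQ) example `(𝒜, q)`. -/
abbrev CQEx := ABox × CQ

/-- An ABox-UCQ example `(𝒜, q)`. -/
abbrev UEx := ABox × UCQ

/-- `O` fits a collection of labeled ABox(-consistency) examples. -/
def FitsCons (O : Ontology) (Ep En : Finset ABox) : Prop :=
  (∀ A ∈ Ep, ConsistentWith A O) ∧ (∀ A ∈ En, ¬ ConsistentWith A O)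

/-- `O` fits a collection of labeled ABox-AQ examples. -/
def FitsAQ (O : Ontology) (Ep En : Finset AQEx) : Prop :=
  (∀ e ∈ Ep, EntailsAQ e.1 O e.2.1 e.2.2) ∧ (∀ e ∈ En, ¬ EntailsAQ e.1 O e.2.1 e.2.2)

/-- `O` fits a collection of labeled ABox-CQ examples. -/
def FitsCQ (O : Ontology) (Ep En : Finset CQEx) : Prop :=
  (∀ e ∈ Ep, EntailsCQ e.1 O e.2) ∧ (∀ e ∈ En, ¬ EntailsCQ e.1 O e.2)

/-- `O` fits a collection of labeled ABox-UCQ examples. -/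
def FitsUCQ (O : Ontology) (Ep En : Finset UEx) : Prop :=
  (∀ e ∈ Ep, EntailsUCQ e.1 O e.2) ∧ (∀ e ∈ En, ¬ EntailsUCQ e.1 O e.2)

/-- An example `(A, q)` is inconsistent if every ALCI-ontology `O` with
`A ∪ O ⊨ q` is inconsistent with `A`. -/
def InconsistentEx (A : ABox) (q : CQ) : Prop :=
  ∀ O : Ontology, OntologyInLang DL.alci O → EntailsCQ A O q → ¬ ConsistentWith A O

/-! ## Completions and refutation candidates -/

/-- The disjoint union `A⁻` of the ABoxes of the negative AQ examples
(the ABoxes of a collection have pairwise disjoint individual names, so the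
disjoint union is the plain union). -/
def NegUnionAQ (En : Finset AQEx) : ABox := En.sup Prod.fst

/-- The disjoint union `A⁻` of the ABoxes of the negative CQ examples. -/
def NegUnionCQ (En : Finset CQEx) : ABox := En.sup Prod.fst

/-- A completion for a collection of ABox-AQ examples: extends `A⁻` by concept
assertions `Q(b)` with `b ∈ ind(A⁻)` and `Q` occurring as an AQ in `E⁺`. -/
def IsCompletionAQ (Ep En : Finset AQEx) (C : ABox) : Prop :=
  NegUnionAQ En ⊆ C ∧
  ∀ α ∈ C, α ∈ NegUnionAQ En ∨
    ∃ Q b, α = Assertion.conc Q b ∧ b ∈ ABoxInds (NegUnionAQ En) ∧ ∃ e ∈ Ep, e.2.1 = Q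

/-- Refutation candidates for a collection of ABox-AQ examples. -/
inductive RefCandAQ (Ep : Finset AQEx) (base : ABox) : ABox → Prop
  | base : RefCandAQ Ep base base
  | step {C : ABox} {A : ABox} {Q a : ℕ} {h : ℕ → ℕ} :
      RefCandAQ Ep base C → (A, Q, a) ∈ Ep → ABoxHom h A C →
      RefCandAQ Ep base (insert (Assertion.conc Q (h a)) C)

/-- A completion for a collection of ABox-FullCQ examples: extends `A⁻` by
concept assertions `Q(b)` with `b ∈ ind(A⁻)` and `Q` occurring in a query of a
positive example. -/
def IsCompletionCQ (Ep En : Finset CQEx) (C : ABox) : Prop :=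
  NegUnionCQ En ⊆ C ∧
  ∀ α ∈ C, α ∈ NegUnionCQ En ∨
    ∃ Q b, α = Assertion.conc Q b ∧ b ∈ ABoxInds (NegUnionCQ En) ∧ ∃ e ∈ Ep, Q ∈ CQCNs e.2

/-- Refutation candidates for a collection of ABox-FullCQ examples. -/
inductive RefCandCQ (Ep : Finset CQEx) (base : ABox) : ABox → Prop
  | base : RefCandCQ Ep base base
  | step {C : ABox} {A : ABox} {q : CQ} {Q a : ℕ} {h : ℕ → ℕ} :
      RefCandCQ Ep base C → (A, q) ∈ Ep → ¬ InconsistentEx A q → ABoxHom h A C →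
      Atom.catom Q (Term.ind a) ∈ q →
      RefCandCQ Ep base (insert (Assertion.conc Q (h a)) C)

/-! ## Forest models, unravelings and `I_{A,h,L}` -/

/-- The edge relation of the graph of a forest model: some role edge, excluding
pairs of ABox individuals. -/
def ForestEdge (I : Interp) (A : ABox) (d e : I.Dom) : Prop :=
  (∃ r, (d, e) ∈ I.roleI r) ∧
  ¬ ∃ a ∈ ABoxInds A, ∃ b ∈ ABoxInds A, d = I.indI a ∧ e = I.indI b

/-- The undirected version of the graph of a forest model. -/
def ForestGraph (I : Interp) (A : ABox) : SimpleGraph I.Dom where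
  Adj d e := d ≠ e ∧ (ForestEdge I A d e ∨ ForestEdge I A e d)
  symm := ⟨fun _ _ h => ⟨h.1.symm, h.2.symm⟩⟩
  loopless := ⟨fun _ h => h.1 rfl⟩

/-- `I` is an `L`-forest model of the ABox `A`:
it is a model of `A`; role edges among ABox individuals are exactly those
asserted in `A`; and the remaining role edges form a forest (for ALC a
directed forest whose edges point away from the roots, for ALCI an
undirected forest). -/
def IsForestModel (L : DL) (I : Interp) (A : ABox) : Prop :=
  I.SatABox A ∧
  (∀ r a b, a ∈ ABoxInds A → b ∈ ABoxInds A →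
    ((I.indI a, I.indI b) ∈ I.roleI r ↔ Assertion.role r a b ∈ A)) ∧
  (match L with
    | DL.alc =>
        (∀ e : I.Dom, {d : I.Dom | ForestEdge I A d e}.Subsingleton) ∧
        WellFounded (fun d e : I.Dom => ForestEdge I A d e)
    | DL.alci =>
        (∀ d : I.Dom, ¬ ForestEdge I A d d) ∧ (ForestGraph I A).IsAcyclic)

/-- `e` is a neighbor of `d` in `I`. -/
def Neighbor (I : Interp) (d e : I.Dom) : Prop :=
  ∃ r, (d, e) ∈ I.roleI r ∨ (e, d) ∈ I.roleI r

/-- The degree of `I` (maximal number of neighbors) is at most `n`. -/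
def DegreeLE (I : Interp) (n : ℕ) : Prop :=
  ∀ d : I.Dom, ∃ s : Finset I.Dom, s.card ≤ n ∧ ∀ e : I.Dom, Neighbor I d e → e ∈ s

/-- The disjoint union of a family of interpretations (`pick` chooses, for
every individual name, the component interpreting it). -/
def Interp.disjUnion {ι : Type} (J : ι → Interp) (pick : ℕ → ι) : Interp where
  Dom := Σ i : ι, (J i).Dom
  indI := fun n => ⟨pick n, (J (pick n)).indI n⟩
  indI_inj := by
    intro m n hmn
    obtain ⟨h1, h2⟩ := Sigma.ext_iff.mp hmn
    dsimp only at h1 h2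
    rw [h1] at h2
    exact (J (pick n)).indI_inj (eq_of_heq h2)
  concI := fun P => {x | x.2 ∈ (J x.1).concI P}
  roleI := fun r => {p | ∃ (i : ι) (d e : (J i).Dom),
    p = (⟨i, d⟩, ⟨i, e⟩) ∧ (d, e) ∈ (J i).roleI r}

/-- `l` is a path in `I` starting at `d` (for `L = ALC`, only role names may
occur on the path; for `L = ALCI` also inverse roles). -/
def IsPathFrom (L : DL) (I : Interp) : I.Dom → List (DLRole × I.Dom) → Prop
  | _, [] => True
  | d, (r, e) :: l =>
      (d, e) ∈ I.rSem r ∧ (L = DL.alc → ∃ m, r = DLRole.name m) ∧ IsPathFrom L I e l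

/-- The tail (last element) of a path starting at `d`. -/
def PathTail (I : Interp) (d : I.Dom) (l : List (DLRole × I.Dom)) : I.Dom :=
  (l.getLast?).elim d Prod.snd

/-- Domain of `I_{A,h,L}`: individual names plus, for every individual name,
paths in `I` (elements not corresponding to `ind(A)` or to valid nonempty
paths are unlabeled and isolated junk). -/
abbrev IAhDom (I : Interp) : Type := ℕ ⊕ (ℕ × List (DLRole × I.Dom))

/-- The element of `I_{A,h,L}` given by the path `l` attached at individual
`a`; the root (empty path) is identified with `a` itself. -/
def IAhNode (I : Interp) (a : ℕ) : List (DLRole × I.Dom) → IAhDom I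
  | [] => Sum.inl a
  | l => Sum.inr (a, l)

/-- Validity of a path attached at `a` in `I_{A,h,L}`. -/
def IAhValid (L : DL) (I : Interp) (A : ABox) (h : ℕ → I.Dom)
    (a : ℕ) (l : List (DLRole × I.Dom)) : Prop :=
  a ∈ ABoxInds A ∧ IsPathFrom L I (h a) l

/-- The interpretation `I_{A,h,L}`: start from the interpretation with domain
`ind(A)`, concept memberships induced from `I` via `h`, and role edges exactly
the role assertions of `A`; then disjointly attach, for every `a ∈ ind(A)`,
the `L`-unraveling of `I` at `h(a)`, identifying its root with `a`. -/
def IAh (L : DL) (I : Interp) (A : ABox) (h : ℕ → I.Dom) : Interp where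
  Dom := IAhDom I
  indI := Sum.inl
  indI_inj := Sum.inl_injective
  concI := fun P => {x : IAhDom I |
    (∃ a, x = Sum.inl a ∧ a ∈ ABoxInds A ∧ h a ∈ I.concI P) ∨
    (∃ a l, x = Sum.inr (a, l) ∧ l ≠ [] ∧ IAhValid L I A h a l ∧
      PathTail I (h a) l ∈ I.concI P)}
  roleI := fun r => {p : IAhDom I × IAhDom I |
    (∃ a b, p.1 = Sum.inl a ∧ p.2 = Sum.inl b ∧ Assertion.role r a b ∈ A) ∨
    (∃ a l e, IAhValid L I A h a (l ++ [(DLRole.name r, e)]) ∧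
      p.1 = IAhNode I a l ∧ p.2 = IAhNode I a (l ++ [(DLRole.name r, e)])) ∨
    (∃ a l e, IAhValid L I A h a (l ++ [(DLRole.inv r, e)]) ∧
      p.1 = IAhNode I a (l ++ [(DLRole.inv r, e)]) ∧ p.2 = IAhNode I a l)}

/-- Restriction of an interpretation to the elements satisfying `P`
(elements outside `P` become unlabeled and isolated). -/
def Interp.restrictP (I : Interp) (P : I.Dom → Prop) : Interp where
  Dom := I.Dom
  indI := I.indI
  indI_inj := I.indI_inj
  concI := fun Q => {d | d ∈ I.concI Q ∧ P d}
  roleI := fun r => {p | p ∈ I.roleI r ∧ P p.1 ∧ P p.2}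

/-- Depth of elements of `I_{A,h,L}` (ABox individuals have depth 0). -/
def IAhDepthLE (I : Interp) (n : ℕ) : IAhDom I → Prop
  | Sum.inl _ => True
  | Sum.inr al => al.2.length ≤ n

/-! ## Sizes -/

/-- Size of a UCQ (number of atoms). -/
def UCQSize (q : UCQ) : ℕ := q.sum Finset.card

/-- Size of an ABox-UCQ example. -/
def UExSize (e : UEx) : ℕ := e.1.card + UCQSize e.2

/-- Size `||E||` of a collection of ABox-UCQ examples. -/
def ESize (Ep En : Finset UEx) : ℕ := Ep.sum UExSize + En.sum UExSize

/-- The (exponential) bound `bound(E)` on the degree: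
`||E⁻||` plus the sum over positive examples `(A,q)` of `(||(A,q)||+1)^{||q||}`. -/
def EBound (Ep En : Finset UEx) : ℕ :=
  En.sum UExSize + Ep.sum (fun e => (UExSize e + 1) ^ UCQSize e.2)

/-! ## Connectivity, components, variations -/

def ABoxAdj (A : ABox) (a b : ℕ) : Prop :=
  ∃ r, Assertion.role r a b ∈ A ∨ Assertion.role r b a ∈ A

/-- Connectivity of individuals in an ABox. -/
def ABoxConn (A : ABox) : ℕ → ℕ → Prop := Relation.ReflTransGen (ABoxAdj A)

/-- `B` is a maximally connected component of the ABox `A`. -/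
def IsComponent (B A : ABox) : Prop :=
  ∃ a ∈ ABoxInds A, ∀ α : Assertion,
    α ∈ B ↔ α ∈ A ∧ ∀ c ∈ AssertionInds α, ABoxConn A a c

def AtomTerms : Atom → Finset Term
  | .catom _ t => {t}
  | .ratom _ t t' => {t, t'}

/-- The terms (variables and individuals) occurring in a CQ. -/
def CQTerms (q : CQ) : Finset Term := q.biUnion AtomTerms

def CQAdj (q : CQ) (t t' : Term) : Prop :=
  ∃ r, Atom.ratom r t t' ∈ q ∨ Atom.ratom r t' t ∈ q

/-- A CQ is connected. -/
def CQConnected (q : CQ) : Prop :=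
  ∀ t ∈ CQTerms q, ∀ t' ∈ CQTerms q, Relation.ReflTransGen (CQAdj q) t t'

def SubstTerm (σ : ℕ → Term) : Term → Term
  | .var x => σ x
  | .ind a => Term.ind a

def SubstAtom (σ : ℕ → Term) : Atom → Atom
  | .catom P t => Atom.catom P (SubstTerm σ t)
  | .ratom r t t' => Atom.ratom r (SubstTerm σ t) (SubstTerm σ t')

/-- An `A`-variation of a CQ `p`: consistently replace zero or more variables by
individual names from `ind(A)` and possibly identify variables. -/
def IsVariation (A : ABox) (p p' : CQ) : Prop :=
  ∃ σ : ℕ → Term,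
    (∀ x : ℕ, (∃ y, σ x = Term.var y) ∨ ∃ a ∈ ABoxInds A, σ x = Term.ind a) ∧
    p' = p.image (SubstAtom σ)

def Assertion.toAtom : Assertion → Atom
  | .conc P a => Atom.catom P (Term.ind a)
  | .role r a b => Atom.ratom r (Term.ind a) (Term.ind b)

/-- The interpretation `I_q` induced by a CQ. -/
def CQInterp (p : CQ) : Interp where
  Dom := Term
  indI := Term.ind
  indI_inj := fun _ _ hab => Term.ind.inj hab
  concI := fun P => {t | Atom.catom P t ∈ p}
  roleI := fun r => {tt | Atom.ratom r tt.1 tt.2 ∈ p}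

/-- A proper `A`-variation. -/
def IsProperVariation (L : DL) (A : ABox) (p p' : CQ) : Prop :=
  IsVariation A p p' ∧
  (∀ r a b, Atom.ratom r (Term.ind a) (Term.ind b) ∈ p' → Assertion.role r a b ∈ A) ∧
  IsForestModel L (CQInterp p') (A.filter fun α => α.toAtom ∈ p')

/-- A weak homomorphism from a CQ into an interpretation (need not be the
identity on individual names). -/
def WeakHom (I : Interp) (g : Term → I.Dom) (p : CQ) : Prop :=
  (∀ P t, Atom.catom P t ∈ p → g t ∈ I.concI P) ∧
  (∀ r t t', Atom.ratom r t t' ∈ p → (g t, g t') ∈ I.roleI r)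

def ReachStep (L : DL) (I : Interp) (d e : I.Dom) : Prop :=
  match L with
  | DL.alc => ∃ r, (d, e) ∈ I.roleI r
  | DL.alci => ∃ r, (d, e) ∈ I.roleI r ∨ (e, d) ∈ I.roleI r

/-- `L`-reachability in an interpretation. -/
def Reach (L : DL) (I : Interp) : I.Dom → I.Dom → Prop :=
  Relation.ReflTransGen (ReachStep L I)

/-- Compatibility of a weak homomorphism `g` (from `p'` to `I`) with a
homomorphism `h` (from `A` to `I`). -/
def CompatibleWith (L : DL) (I : Interp) (A : ABox) (h : ℕ → I.Dom)
    (p' : CQ) (g : Term → I.Dom) : Prop :=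
  (∀ a ∈ CQInds p', g (Term.ind a) = h a) ∧
  (∀ x : ℕ, Term.var x ∈ CQTerms p' →
    ∃ a ∈ ABoxInds A, Reach L I (h a) (g (Term.var x)))

/-- Query classes. -/
inductive QClass : Type
  | aq
  | fullcq
  | cq
  | ucq

/-- A UCQ belongs to a query class. -/
def UCQInClass : QClass → UCQ → Prop
  | .aq, q => ∃ Q a, q = {({Atom.catom Q (Term.ind a)} : CQ)}
  | .fullcq, q => ∃ p : CQ, q = {p} ∧ CQIsFull p
  | .cq, q => ∃ p : CQ, q = {p}
  | .ucq, _ => True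


/-
`{⊤ ⊑ A'}` has the model in which every concept and role name is universal, so it is
consistent with every ABox while entailing `A'(c)` for every ABox and `c`. `{⊤ ⊑ ⊥}` has no
model at all, so it entails every AQ and is consistent with no ABox.
-/

def fullInterp : Interp where
  Dom := ℕ
  indI := id
  indI_inj := Function.injective_id
  concI := fun _ => Set.univ
  roleI := fun _ => Set.univ

lemma fullInterp_satABox (A : ABox) : fullInterp.SatABox A := by
  rintro (_ | _) _ <;> trivial

lemma fullInterp_isModelOf_top_sub_atom (Q : ℕ) :
    fullInterp.IsModelOf {(Concept.top, Concept.atom Q)} := by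
  intro ci hci
  rw [Finset.mem_singleton.mp hci]
  exact Set.subset_univ _

lemma consistentWith_top_sub_atom (A : ABox) (Q : ℕ) :
    ConsistentWith A {(Concept.top, Concept.atom Q)} :=
  ⟨fullInterp, fullInterp_isModelOf_top_sub_atom Q, fullInterp_satABox A⟩

lemma entailsAQ_of_top_sub_atom_mem {O : Ontology} {Q : ℕ}
    (hO : (Concept.top, Concept.atom Q) ∈ O) (A : ABox) (a : ℕ) : EntailsAQ A O Q a :=
  fun I hI _ => hI _ hO (Set.mem_univ (I.indI a))

lemma Interp.not_isModelOf_of_top_sub_bot_mem (I : Interp) {O : Ontology}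
    (hO : (Concept.top, Concept.neg Concept.top) ∈ O) : ¬ I.IsModelOf O :=
  fun hI => hI _ hO (Set.mem_univ (I.indI 0)) (Set.mem_univ _)

lemma not_consistentWith_of_top_sub_bot_mem {O : Ontology}
    (hO : (Concept.top, Concept.neg Concept.top) ∈ O) (A : ABox) : ¬ ConsistentWith A O :=
  fun ⟨I, hI, _⟩ => I.not_isModelOf_of_top_sub_bot_mem hO hI

lemma entailsAQ_of_top_sub_bot_mem {O : Ontology}
    (hO : (Concept.top, Concept.neg Concept.top) ∈ O) (A : ABox) (Q a : ℕ) :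
    EntailsAQ A O Q a :=
  fun I hI _ => absurd hI (I.not_isModelOf_of_top_sub_bot_mem hO)

lemma ontologyInLang_singleton (L : DL) {C D : Concept} (hC : C.invFree ∧ C.countFree)
    (hD : D.invFree ∧ D.countFree) : OntologyInLang L {(C, D)} := by
  cases L <;>
  · intro ci hci
    rw [Finset.mem_singleton.mp hci]
    tauto

lemma fitsCons_top_sub_atom (Q : ℕ) (Ep : Finset ABox) :
    FitsCons {(Concept.top, Concept.atom Q)} Ep ∅ :=
  ⟨fun A _ => consistentWith_top_sub_atom A Q, fun _ h => absurd h (Finset.notMem_empty _)⟩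

lemma not_fitsAQ_top_sub_atom {Ep' En' : Finset AQEx} {e : AQEx} (he : e ∈ En') :
    ¬ FitsAQ {(Concept.top, Concept.atom e.2.1)} Ep' En' :=
  fun hfit => hfit.2 e he (entailsAQ_of_top_sub_atom_mem (Finset.mem_singleton_self _) _ _)

lemma fitsAQ_top_sub_bot (Ep' : Finset AQEx) :
    FitsAQ {(Concept.top, Concept.neg Concept.top)} Ep' ∅ :=
  ⟨fun _ _ => entailsAQ_of_top_sub_bot_mem (Finset.mem_singleton_self _) _ _ _,
    fun _ h => absurd h (Finset.notMem_empty _)⟩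

lemma not_fitsCons_top_sub_bot {Ep En : Finset ABox} {A : ABox} (hA : A ∈ Ep) :
    ¬ FitsCons {(Concept.top, Concept.neg Concept.top)} Ep En :=
  fun hfit => not_consistentWith_of_top_sub_bot_mem (Finset.mem_singleton_self _) A (hfit.1 A hA)

/-- There is a collection of labeled ABox-consistency examples
whose set of fitting `L`-ontologies is not the set of fitting `L`-ontologies
of any collection of labeled ABox-AQ examples. Concretely, for
`E = ({{s(a,b)}}, ∅)` and any ABox-AQ collection `E'`: if `E'` has a negative
example `(𝒜, A'(c))` then `{⊤ ⊑ A'}` fits `E` but not `E'`; if `E'` has no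
negative example then `{⊤ ⊑ ⊥}` fits `E'` but not `E`. (Here `s` is the role
name `0` and `a, b` are the individual names `0, 1`.) -/
theorem consistency_not_expressible_by_aq (L : DL) :
    let Ep : Finset ABox := {({Assertion.role 0 0 1} : ABox)}
    let En : Finset ABox := (∅ : Finset ABox)
    (∀ Ep' En' : Finset AQEx,
      (∀ e ∈ En',
        FitsCons ({(Concept.top, Concept.atom e.2.1)} : Ontology) Ep En ∧
        ¬ FitsAQ ({(Concept.top, Concept.atom e.2.1)} : Ontology) Ep' En') ∧
      (En' = ∅ →
        FitsAQ ({(Concept.top, Concept.neg Concept.top)} : Ontology) Ep' En' ∧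
        ¬ FitsCons ({(Concept.top, Concept.neg Concept.top)} : Ontology) Ep En)) ∧
    (∀ Ep' En' : Finset AQEx,
      {O : Ontology | OntologyInLang L O ∧ FitsCons O Ep En} ≠
      {O : Ontology | OntologyInLang L O ∧ FitsAQ O Ep' En'}) := by
  intro Ep En
  refine ⟨fun Ep' En' =>
    ⟨fun _ he => ⟨fitsCons_top_sub_atom _ Ep, not_fitsAQ_top_sub_atom he⟩,
      fun hEn => ⟨hEn ▸ fitsAQ_top_sub_bot Ep',
        not_fitsCons_top_sub_bot (Finset.mem_singleton_self _)⟩⟩,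
    fun Ep' En' heq => ?_⟩
  rcases En'.eq_empty_or_nonempty with rfl | ⟨e, he⟩
  · exact not_fitsCons_top_sub_bot (Finset.mem_singleton_self _)
      ((Set.ext_iff.mp heq {(Concept.top, Concept.neg Concept.top)}).mpr
        ⟨ontologyInLang_singleton L ⟨trivial, trivial⟩ ⟨trivial, trivial⟩,
          fitsAQ_top_sub_bot Ep'⟩).2
  · exact not_fitsAQ_top_sub_atom he
      ((Set.ext_iff.mp heq {(Concept.top, Concept.atom e.2.1)}).mp
        ⟨ontologyInLang_singleton L ⟨trivial, trivial⟩ ⟨trivial, trivial⟩,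
          fitsCons_top_sub_atom _ Ep⟩).2

end DLFit
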